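/- arXiv:2108.03616 — 4 statements merged into one kernel-verified Lean document; each statement's English description precedes it below -/
import Mathlib

section
/- Let W ⊆ R^n be a linear subspace whose associated linear matroid is non-separable (every pair of indices lies in a common circuit). Then for any three distinct indices i, j, k ∈ [n], the pairwise circuit imbalance satisfies κ_{ij} ≤ κ_{ik} · κ_{kj}. -/
open Finset

variable {ι : Type*} [Fintype ι] [DecidableEq ι]

/-- `y` conforms to `x` if `x i * y i > 0` whenever `y i ≠ 0`. -/
def Conforms (y x : ι → ℝ) : Prop := ∀ i, y i ≠ 0 → x i * y i > 0

/-- An elementary vector of `W`: a support-minimal nonzero vector of `W`. -/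
def IsElementary (W : Submodule ℝ (ι → ℝ)) (g : ι → ℝ) : Prop :=
  g ∈ W ∧ g ≠ 0 ∧
    ∀ h ∈ W, h ≠ 0 → {i | h i ≠ 0} ⊆ {i | g i ≠ 0} → {i | h i ≠ 0} = {i | g i ≠ 0}

/-- The fractional circuit imbalance measure `κ_W`. -/
noncomputable def kappa (W : Submodule ℝ (ι → ℝ)) : ℝ :=
  sSup ({1} ∪ {t : ℝ | ∃ g : ι → ℝ, IsElementary W g ∧
    ∃ i j, g i ≠ 0 ∧ g j ≠ 0 ∧ t = |g j| / |g i|})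

/-- An integer elementary vector, normalized so that the gcd of its entries is 1. -/
def IsIntElementary (W : Submodule ℝ (ι → ℝ)) (g : ι → ℤ) : Prop :=
  IsElementary W (fun i => (g i : ℝ)) ∧ Finset.univ.gcd (fun i => (g i).natAbs) = 1

/-- The max-circuit imbalance measure `κ̄_W`. -/
noncomputable def barKappa (W : Submodule ℝ (ι → ℝ)) : ℕ :=
  sSup {k : ℕ | ∃ g : ι → ℤ, IsIntElementary W g ∧
    k = Finset.univ.sup fun i => (g i).natAbs}

/-- The lcm-circuit imbalance measure `κ̇_W`: the least positive integer divisible by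
every entry of every normalized integer elementary vector. -/
noncomputable def dotKappa (W : Submodule ℝ (ι → ℝ)) : ℕ :=
  sInf {k : ℕ | 0 < k ∧ ∀ g : ι → ℤ, IsIntElementary W g → ∀ i, g i ≠ 0 → (g i).natAbs ∣ k}

/-- A rational linear subspace: one spanned by rational vectors. -/
def IsRationalSubspace (W : Submodule ℝ (ι → ℝ)) : Prop :=
  ∃ S : Set (ι → ℚ), W = Submodule.span ℝ ((fun v : ι → ℚ => fun i => ((v i : ℝ))) '' S)

/-- The orthogonal complement of `W` in `ℝ^ι` with the standard inner product. -/
def orthComp (W : Submodule ℝ (ι → ℝ)) : Submodule ℝ (ι → ℝ) where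
  carrier := {v | ∀ w ∈ W, ∑ i, v i * w i = 0}
  add_mem' := by
    intro a b ha hb w hw
    have := ha w hw
    have := hb w hw
    simp only [Set.mem_setOf_eq, Pi.add_apply, add_mul, Finset.sum_add_distrib, *]
    ring
  zero_mem' := by intro w hw; simp
  smul_mem' := by
    intro c a ha w hw
    have h := ha w hw
    simp only [Set.mem_setOf_eq, Pi.smul_apply, smul_eq_mul, mul_assoc, ← Finset.mul_sum, h,
      mul_zero]

/-- The pairwise circuit imbalance `κ_{ij}`. -/
noncomputable def kappaPair (W : Submodule ℝ (ι → ℝ)) (i j : ι) : ℝ :=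
  sSup {t : ℝ | ∃ g : ι → ℝ, IsElementary W g ∧ g i ≠ 0 ∧ g j ≠ 0 ∧ t = |g j| / |g i|}

/-!
If an elementary vector `g` through `i` and `j` also passes through `k`, then
`|g j| ≤ κ_kj |g k| ≤ κ_kj κ_ik |g i|`. Otherwise, among the elementary vectors `h` through `k`
that meet `supp g` (non-separability provides one through `i`), take one whose support leaves
`supp g ∪ {k}` as little as possible. Then every elementary vector `f` conformal to
`h e • g - g e • h` (for `e ∈ supp g`) passes through `k`: if `f k = 0`, either `f` has an entry
`l` outside `supp g ∪ {k}`, and eliminating `l` from `h` with `f` yields a competitor with smaller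
excess, or `supp f ⊆ supp g`, which is impossible as `f e = 0`. Passing to such conformal parts
one can arrange `h i ≠ 0 = h j`, unless `g` agrees at `i`, `j` with a multiple of `h`. Then
`w = h i • g - g i • h` decomposes conformally into elementary vectors all through `k`, so
`|h i| |g j| = |w j| ≤ κ_kj |w k| = κ_kj |g i| |h k| ≤ κ_kj κ_ik |g i| |h i|`.
-/

open Function

section Conforms

variable {α : Type*}

theorem Conforms.refl (x : α → ℝ) : Conforms x x :=
  fun _ hi => mul_self_pos.2 hi

theorem Conforms.support_subset {x y : α → ℝ} (h : Conforms y x) : y.support ⊆ x.support :=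
  fun i hi hxi => by simpa [hxi] using h i hi

theorem Conforms.trans {x y z : α → ℝ} (hzy : Conforms z y) (hyx : Conforms y x) :
    Conforms z x := by
  intro i hi
  have hzi := hzy i hi
  have hyi := hyx i fun h => by simp [h] at hzi
  have hy : 0 < y i * y i := mul_self_pos.2 fun h => by simp [h] at hzi
  exact (mul_pos_iff_of_pos_right hy).1 (by linarith [mul_pos hyi hzi])

theorem Conforms.smul {x y : α → ℝ} (h : Conforms y x) {c : ℝ} (hc : 0 < c) :
    Conforms (c • y) x := by
  intro i hi
  have := h i (right_ne_zero_of_mul hi)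
  simp only [Pi.smul_apply, smul_eq_mul]
  nlinarith

theorem exists_conforms_sub_smul [Finite α] {v h : α → ℝ} (hh : h ≠ 0)
    (hsub : h.support ⊆ v.support) : ∃ e, h e ≠ 0 ∧ Conforms (v - (v e / h e) • h) v := by
  obtain ⟨e, he, hmin⟩ := Set.exists_min_image h.support (fun l => |v l / h l|)
    (Set.toFinite _) (support_nonempty_iff.2 hh)
  refine ⟨e, he, fun l hl => ?_⟩
  set t := v e / h e
  have hvl : v l ≠ 0 := by
    intro hvl
    have hhl : h l = 0 := not_not.1 fun hhl => hsub hhl hvl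
    simp [hvl, hhl] at hl
  simp only [Pi.sub_apply, Pi.smul_apply, smul_eq_mul] at hl ⊢
  have hth : |t * h l| ≤ |v l| := by
    by_cases hhl : h l = 0
    · simp [hhl]
    · calc |t * h l| = |t| * |h l| := abs_mul _ _
        _ ≤ |v l / h l| * |h l| := mul_le_mul_of_nonneg_right (hmin l hhl) (abs_nonneg _)
        _ = |v l| := by rw [abs_div, div_mul_cancel₀ _ (abs_ne_zero.2 hhl)]
  have : v l * (t * h l) ≤ v l * v l := by
    calc v l * (t * h l) ≤ |v l| * |t * h l| := by rw [← abs_mul]; exact le_abs_self _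
      _ ≤ |v l| * |v l| := by gcongr
      _ = v l * v l := abs_mul_abs_self _
  exact lt_of_le_of_ne (by linarith) (mul_ne_zero hvl hl).symm

theorem sum_abs_apply_eq_abs_of_conforms {s : Finset (α → ℝ)} {w : α → ℝ}
    (hs : ∀ f ∈ s, Conforms f w) (hsum : ∑ f ∈ s, f = w) (k : α) :
    ∑ f ∈ s, |f k| = |w k| := by
  have hsign : ∀ f ∈ s, |f k| = SignType.sign (w k) * f k := by
    intro f hf
    by_cases hfk : f k = 0
    · simp [hfk]
    rcases mul_pos_iff.1 (hs f hf k hfk) with ⟨hw, hf⟩ | ⟨hw, hf⟩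
    · simp [sign_pos hw, abs_of_pos hf]
    · simp [sign_neg hw, abs_of_neg hf]
  rw [Finset.sum_congr rfl hsign, ← Finset.mul_sum, ← Finset.sum_apply, hsum, sign_mul_self]

theorem abs_apply_le_of_sum_eq_of_conforms {s : Finset (α → ℝ)} {w : α → ℝ}
    (hs : ∀ f ∈ s, Conforms f w) (hsum : ∑ f ∈ s, f = w) {c : ℝ} {j k : α}
    (hc : ∀ f ∈ s, |f j| ≤ c * |f k|) : |w j| ≤ c * |w k| :=
  calc |w j| = |∑ f ∈ s, f j| := by rw [← hsum, Finset.sum_apply]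
    _ ≤ ∑ f ∈ s, |f j| := Finset.abs_sum_le_sum_abs _ _
    _ ≤ ∑ f ∈ s, c * |f k| := Finset.sum_le_sum hc
    _ = c * |w k| := by rw [← Finset.mul_sum, sum_abs_apply_eq_abs_of_conforms hs hsum]

end Conforms

section Elementary

variable {α : Type*} {W : Submodule ℝ (α → ℝ)}

theorem IsElementary.support_eq {g h : α → ℝ} (hg : IsElementary W g) (hh : h ∈ W)
    (hh0 : h ≠ 0) (hsub : h.support ⊆ g.support) : h.support = g.support :=
  hg.2.2 h hh hh0 hsub

theorem IsElementary.smul {g : α → ℝ} (hg : IsElementary W g) {c : ℝ} (hc : c ≠ 0) :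
    IsElementary W (c • g) := by
  have hsupp : (c • g).support = g.support := support_const_smul_of_ne_zero c g hc
  refine ⟨W.smul_mem c hg.1, smul_ne_zero hc hg.2.1, fun h hW h0 hsub => ?_⟩
  have := hg.support_eq hW h0 (hsupp ▸ hsub)
  rwa [← hsupp] at this

theorem IsElementary.eq_smul_of_support_subset {g h : α → ℝ} (hg : IsElementary W g)
    (hh : h ∈ W) (hsub : h.support ⊆ g.support) : ∃ c : ℝ, h = c • g := by
  obtain ⟨x, hx⟩ := support_nonempty_iff.2 hg.2.1
  refine ⟨h x / g x, by_contra fun hne => ?_⟩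
  have hsub' : (h - (h x / g x) • g).support ⊆ g.support :=
    (support_sub _ _).trans (Set.union_subset hsub (support_const_smul_subset _ _))
  have hx' : x ∈ (h - (h x / g x) • g).support :=
    (hg.support_eq (W.sub_mem hh (W.smul_mem _ hg.1)) (sub_ne_zero.2 hne) hsub').symm ▸ hx
  simp [div_mul_cancel₀ _ hx] at hx'

theorem IsElementary.abs_div_abs_eq {g g' : α → ℝ} (hg : IsElementary W g)
    (hg' : IsElementary W g') (hsub : g'.support ⊆ g.support) (x y : α) :
    |g' y| / |g' x| = |g y| / |g x| := by
  obtain ⟨c, rfl⟩ := hg.eq_smul_of_support_subset hg'.1 hsub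
  have hc : c ≠ 0 := left_ne_zero_of_smul hg'.2.1
  simp only [Pi.smul_apply, smul_eq_mul, abs_mul]
  exact mul_div_mul_left _ _ (abs_ne_zero.2 hc)

theorem exists_isElementary_conforms [Finite α] {w : α → ℝ} (hw : w ∈ W) (hw0 : w ≠ 0) :
    ∃ f, IsElementary W f ∧ Conforms f w := by
  obtain ⟨v, ⟨hvW, hv0, hvw⟩, hmin⟩ := (measure fun v : α → ℝ => v.support.ncard).wf.has_min
    {v | v ∈ W ∧ v ≠ 0 ∧ Conforms v w} ⟨w, hw, hw0, Conforms.refl w⟩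
  refine ⟨v, ⟨hvW, hv0, fun h hh hh0 hsub => ?_⟩, hvw⟩
  by_contra hne
  obtain ⟨e, hhe, hconf⟩ := exists_conforms_sub_smul hh0 hsub
  set v' := v - (v e / h e) • h
  have hv'0 : v' ≠ 0 := by
    intro hv'
    rw [sub_eq_zero] at hv'
    exact hne (hsub.antisymm (hv' ▸ support_const_smul_subset _ _))
  have hv'e : e ∉ v'.support := by simp [v', div_mul_cancel₀ _ hhe]
  refine hmin v' ⟨W.sub_mem hvW (W.smul_mem _ hh), hv'0, hconf.trans hvw⟩
    (Set.ncard_lt_ncard ⟨hconf.support_subset, fun hsup => hv'e (hsup (hsub hhe))⟩)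

theorem exists_finset_isElementary_conforms_sum_eq [Finite α] {w : α → ℝ} (hw : w ∈ W) :
    ∃ s : Finset (α → ℝ), (∀ f ∈ s, IsElementary W f ∧ Conforms f w) ∧ ∑ f ∈ s, f = w := by
  classical
  rcases eq_or_ne w 0 with rfl | hw0
  · exact ⟨∅, by simp, by simp⟩
  obtain ⟨f, hf, hfw⟩ := exists_isElementary_conforms hw hw0
  obtain ⟨e, hfe, hconf⟩ := exists_conforms_sub_smul hf.2.1 hfw.support_subset
  set c := w e / f e
  have hc : 0 < c := div_pos_iff.2 (mul_pos_iff.1 (hfw e hfe))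
  have hw'e : (w - c • f) e = 0 := by simp [c, div_mul_cancel₀ _ hfe]
  have hlt : (w - c • f).support.ncard < w.support.ncard :=
    Set.ncard_lt_ncard ⟨hconf.support_subset,
      fun hsup => hsup (hfw.support_subset hfe) hw'e⟩
  obtain ⟨s, hs, hsum⟩ :=
    exists_finset_isElementary_conforms_sum_eq (W.sub_mem hw (W.smul_mem c hf.1))
  have hnotin : c • f ∉ s := fun hmem =>
    (hs _ hmem).2.support_subset (by simpa using ⟨hc.ne', hfe⟩) hw'e
  refine ⟨insert (c • f) s, (Finset.forall_mem_insert _ _ _).2 ⟨⟨hf.smul hc.ne', hfw.smul hc⟩,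
    fun g hg => ⟨(hs g hg).1, (hs g hg).2.trans hconf⟩⟩, ?_⟩
  rw [Finset.sum_insert hnotin, hsum, add_sub_cancel]
termination_by w.support.ncard

theorem exists_isElementary_conforms_apply_ne_zero [Finite α] {w : α → ℝ} (hw : w ∈ W) {x : α}
    (hx : w x ≠ 0) : ∃ f, IsElementary W f ∧ Conforms f w ∧ f x ≠ 0 := by
  obtain ⟨s, hs, hsum⟩ := exists_finset_isElementary_conforms_sum_eq hw
  rw [← hsum, Finset.sum_apply] at hx
  obtain ⟨f, hf, hfx⟩ := Finset.exists_ne_zero_of_sum_ne_zero hx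
  exact ⟨f, (hs f hf).1, (hs f hf).2, hfx⟩

end Elementary

section KappaPair

variable {α : Type*} {W : Submodule ℝ (α → ℝ)}

theorem kappaPair_nonneg (x y : α) : 0 ≤ kappaPair W x y :=
  Real.sSup_nonneg (by rintro _ ⟨g, -, -, -, rfl⟩; positivity)

theorem finite_setOf_abs_div_abs [Finite α] (W : Submodule ℝ (α → ℝ)) (x y : α) :
    {t : ℝ | ∃ g, IsElementary W g ∧ g x ≠ 0 ∧ g y ≠ 0 ∧ t = |g y| / |g x|}.Finite := by
  refine (Set.finite_range fun S : Set α =>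
    sSup {t : ℝ | ∃ g, IsElementary W g ∧ g.support = S ∧ t = |g y| / |g x|}).subset ?_
  rintro _ ⟨g, hg, -, -, rfl⟩
  refine ⟨g.support, ?_⟩
  have : {t : ℝ | ∃ g', IsElementary W g' ∧ g'.support = g.support ∧ t = |g' y| / |g' x|} =
      {|g y| / |g x|} := by
    refine Set.eq_singleton_iff_unique_mem.2 ⟨⟨g, hg, rfl, rfl⟩, ?_⟩
    rintro _ ⟨g', hg', hS, rfl⟩
    exact hg.abs_div_abs_eq hg' hS.subset x y
  simp only [this, csSup_singleton]

theorem IsElementary.abs_apply_le_kappaPair_mul [Finite α] {g : α → ℝ} (hg : IsElementary W g)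
    {x : α} (hx : g x ≠ 0) (y : α) : |g y| ≤ kappaPair W x y * |g x| := by
  by_cases hy : g y = 0
  · simpa [hy] using mul_nonneg (kappaPair_nonneg x y) (abs_nonneg (g x))
  rw [← div_le_iff₀ (abs_pos.2 hx)]
  exact le_csSup (finite_setOf_abs_div_abs W x y).bddAbove ⟨g, hg, hx, hy, rfl⟩

theorem abs_apply_le_kappaPair_mul_of_forall_conforms [Finite α] {w : α → ℝ} (hw : w ∈ W)
    {k : α} (hk : ∀ f, IsElementary W f → Conforms f w → f k ≠ 0) (j : α) :
    |w j| ≤ kappaPair W k j * |w k| := by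
  obtain ⟨s, hs, hsum⟩ := exists_finset_isElementary_conforms_sum_eq hw
  exact abs_apply_le_of_sum_eq_of_conforms (fun f hf => (hs f hf).2) hsum
    fun f hf => (hs f hf).1.abs_apply_le_kappaPair_mul (hk f (hs f hf).1 (hs f hf).2) j

end KappaPair

section Bridge

variable {α : Type*}

theorem support_smul_sub_smul_subset (a b : ℝ) (g h : α → ℝ) :
    (a • g - b • h).support ⊆ g.support ∪ h.support :=
  (support_sub _ _).trans
    (Set.union_subset_union (support_const_smul_subset _ _) (support_const_smul_subset _ _))

def excess (g : α → ℝ) (k : α) (h : α → ℝ) : Set α := h.support \ insert k g.support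

theorem excess_subset {g h f : α → ℝ} {k : α} (hf : f.support ⊆ g.support ∪ h.support) :
    excess g k f ⊆ excess g k h :=
  fun _ ⟨hfx, hx⟩ => ⟨(hf hfx).resolve_left fun hgx => hx (Or.inr hgx), hx⟩

def IsBridge (W : Submodule ℝ (α → ℝ)) (g : α → ℝ) (k : α) (h : α → ℝ) : Prop :=
  IsElementary W h ∧ h k ≠ 0 ∧ ∃ e, g e ≠ 0 ∧ h e ≠ 0

def IsMinimalBridge (W : Submodule ℝ (α → ℝ)) (g : α → ℝ) (k : α) (h : α → ℝ) : Prop :=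
  IsBridge W g k h ∧ ∀ h', IsBridge W g k h' → (excess g k h).ncard ≤ (excess g k h').ncard

variable {W : Submodule ℝ (α → ℝ)} {g h : α → ℝ} {k : α}

theorem exists_isMinimalBridge (hh : IsBridge W g k h) : ∃ h₀, IsMinimalBridge W g k h₀ := by
  obtain ⟨h₀, hh₀, hmin⟩ := (measure fun h => (excess g k h).ncard).wf.has_min
    {h | IsBridge W g k h} ⟨h, hh⟩
  exact ⟨h₀, hh₀, fun h' hh' => not_lt.1 (hmin h' hh')⟩

theorem IsMinimalBridge.support_subset_of_apply_eq_zero [Finite α] {f : α → ℝ}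
    (hh : IsMinimalBridge W g k h) (hf : IsElementary W f) (hfk : f k = 0)
    (hfsupp : f.support ⊆ g.support ∪ h.support) : f.support ⊆ g.support := by
  intro l hfl
  by_contra hgl
  have hhl : h l ≠ 0 := (hfsupp hfl).resolve_left hgl
  have hlk : l ≠ k := by rintro rfl; exact hfl hfk
  set z := h - (h l / f l) • f
  have hzk : z k ≠ 0 := by simpa [z, hfk] using hh.1.2.1
  obtain ⟨u, hu, huz, huk⟩ :=
    exists_isElementary_conforms_apply_ne_zero (W.sub_mem hh.1.1.1 (W.smul_mem _ hf.1)) hzk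
  have hul : u l = 0 :=
    by_contra fun hul => huz.support_subset hul (by simp [div_mul_cancel₀ _ hfl])
  have husupp : u.support ⊆ g.support ∪ h.support :=
    huz.support_subset.trans ((support_sub _ _).trans (Set.union_subset
      Set.subset_union_right ((support_const_smul_subset _ _).trans hfsupp)))
  by_cases hmeet : ∃ e, g e ≠ 0 ∧ u e ≠ 0
  · have hl : l ∈ excess g k h := ⟨hhl, by rintro (rfl | hgl'); exacts [hlk rfl, hgl hgl']⟩
    have hlt : (excess g k u).ncard < (excess g k h).ncard :=
      Set.ncard_lt_ncard ⟨excess_subset husupp, fun hsup => (hsup hl).1 hul⟩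
    exact (hh.2 u ⟨hu, huk, hmeet⟩).not_gt hlt
  · push Not at hmeet
    have hsub : u.support ⊆ h.support :=
      fun x hx => (husupp hx).resolve_left fun hgx => hx (hmeet x hgx)
    have hl : l ∈ u.support := by rw [hh.1.1.support_eq hu.1 hu.2.1 hsub]; exact hhl
    exact hl hul

theorem IsMinimalBridge.apply_ne_zero_of_conforms [Finite α] {f : α → ℝ} {e : α}
    (hg : IsElementary W g) (hh : IsMinimalBridge W g k h) (hge : g e ≠ 0)
    (hf : IsElementary W f) (hfw : Conforms f (h e • g - g e • h)) : f k ≠ 0 := by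
  intro hfk
  have hfg := hg.support_eq hf.1 hf.2.1 (hh.support_subset_of_apply_eq_zero hf hfk
    (hfw.support_subset.trans (support_smul_sub_smul_subset _ _ _ _)))
  have hfe : f e ≠ 0 := by rw [← mem_support, hfg]; exact hge
  exact hfw.support_subset hfe (by simp [mul_comm])

theorem IsMinimalBridge.exists_conforms [Finite α] {e x : α} (hg : IsElementary W g)
    (hh : IsMinimalBridge W g k h) (hge : g e ≠ 0) (hgx : g x ≠ 0)
    (hx : (h e • g - g e • h) x ≠ 0) :
    ∃ f, IsMinimalBridge W g k f ∧ f x ≠ 0 ∧ Conforms f (h e • g - g e • h) := by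
  obtain ⟨f, hf, hfw, hfx⟩ := exists_isElementary_conforms_apply_ne_zero
    (W.sub_mem (W.smul_mem _ hg.1) (W.smul_mem _ hh.1.1.1)) hx
  refine ⟨f, ⟨⟨hf, hh.apply_ne_zero_of_conforms hg hge hf hfw, x, hgx, hfx⟩,
    fun h' hh' => le_trans ?_ (hh.2 h' hh')⟩, hfx, hfw⟩
  exact Set.ncard_le_ncard
    (excess_subset (hfw.support_subset.trans (support_smul_sub_smul_subset _ _ _ _)))

theorem exists_isMinimalBridge_apply_ne_zero [Finite α] {i : α} (hg : IsElementary W g)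
    (hgi : g i ≠ 0) (hh : IsElementary W h) (hhi : h i ≠ 0) (hhk : h k ≠ 0) :
    ∃ h₁, IsMinimalBridge W g k h₁ ∧ h₁ i ≠ 0 := by
  obtain ⟨h₀, hh₀⟩ := exists_isMinimalBridge ⟨hh, hhk, i, hgi, hhi⟩
  by_cases hi : h₀ i = 0
  · obtain ⟨e, hge, he⟩ := hh₀.1.2.2
    obtain ⟨f, hf, hfi, -⟩ := hh₀.exists_conforms hg hge hgi (by simp [hi, hgi, he])
    exact ⟨f, hf, hfi⟩
  · exact ⟨h₀, hh₀, hi⟩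

theorem IsMinimalBridge.abs_apply_le_kappaPair_mul_kappaPair [Finite α] {i j : α}
    (hg : IsElementary W g) (hgi : g i ≠ 0) (hgk : g k = 0) (hh : IsMinimalBridge W g k h)
    (hhi : h i ≠ 0) (hhj : h j = 0) : |g j| ≤ kappaPair W i k * kappaPair W k j * |g i| := by
  have hw := abs_apply_le_kappaPair_mul_of_forall_conforms
    (W.sub_mem (W.smul_mem (h i) hg.1) (W.smul_mem (g i) hh.1.1.1))
    (fun f hf hfw => hh.apply_ne_zero_of_conforms hg hgi hf hfw) j
  simp only [Pi.sub_apply, Pi.smul_apply, smul_eq_mul, hhj, hgk, mul_zero, sub_zero, zero_sub,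
    abs_neg, abs_mul] at hw
  have hhk := hh.1.1.abs_apply_le_kappaPair_mul hhi k
  refine le_of_mul_le_mul_left ?_ (abs_pos.2 hhi)
  calc |h i| * |g j| ≤ kappaPair W k j * (|g i| * |h k|) := hw
    _ ≤ kappaPair W k j * (|g i| * (kappaPair W i k * |h i|)) := by
      gcongr
      exact kappaPair_nonneg k j
    _ = |h i| * (kappaPair W i k * kappaPair W k j * |g i|) := by ring

end Bridge

section Triangle

variable {α : Type*} {W : Submodule ℝ (α → ℝ)} {g : α → ℝ} {i j k : α}

theorem IsElementary.abs_apply_le_kappaPair_mul_kappaPair_of_ne_zero [Finite α]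
    (hg : IsElementary W g) (hgi : g i ≠ 0) (hgk : g k ≠ 0) :
    |g j| ≤ kappaPair W i k * kappaPair W k j * |g i| :=
  calc |g j| ≤ kappaPair W k j * |g k| := hg.abs_apply_le_kappaPair_mul hgk j
    _ ≤ kappaPair W k j * (kappaPair W i k * |g i|) :=
      mul_le_mul_of_nonneg_left (hg.abs_apply_le_kappaPair_mul hgi k) (kappaPair_nonneg k j)
    _ = kappaPair W i k * kappaPair W k j * |g i| := by ring

theorem IsElementary.abs_apply_le_kappaPair_mul_kappaPair [Finite α] {h : α → ℝ}
    (hg : IsElementary W g) (hgi : g i ≠ 0) (hgj : g j ≠ 0)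
    (hh : IsElementary W h) (hhi : h i ≠ 0) (hhk : h k ≠ 0) :
    |g j| ≤ kappaPair W i k * kappaPair W k j * |g i| := by
  by_cases hgk : g k ≠ 0
  · exact hg.abs_apply_le_kappaPair_mul_kappaPair_of_ne_zero hgi hgk
  rw [not_ne_iff] at hgk
  obtain ⟨h₁, hh₁, hh₁i⟩ := exists_isMinimalBridge_apply_ne_zero hg hgi hh hhi hhk
  by_cases hh₁j : h₁ j = 0
  · exact hh₁.abs_apply_le_kappaPair_mul_kappaPair hg hgi hgk hh₁i hh₁j
  by_cases hprop : h₁ j * g i = g j * h₁ i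
  · -- `g` agrees at `i` and `j` with a multiple of `h₁`, which passes through `k`
    have hf := hh₁.1.1.smul (div_ne_zero hgi hh₁i)
    have key := hf.abs_apply_le_kappaPair_mul_kappaPair_of_ne_zero (i := i) (j := j) (k := k)
      (by simp [hgi, hh₁i]) (by simp [hgi, hh₁i, hh₁.1.2.1])
    have hfi : g i / h₁ i * h₁ i = g i := div_mul_cancel₀ _ hh₁i
    have hfj : g i / h₁ i * h₁ j = g j := by field_simp; linarith
    simpa only [Pi.smul_apply, smul_eq_mul, hfi, hfj] using key
  · obtain ⟨f, hf, hfi, hfw⟩ :=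
      hh₁.exists_conforms hg hgj hgi (by simpa [sub_eq_zero] using hprop)
    have hfj : f j = 0 := by_contra fun hfj => hfw.support_subset hfj (by simp [mul_comm])
    exact hf.abs_apply_le_kappaPair_mul_kappaPair hg hgi hgk hfi hfj

end Triangle

theorem kappaPair_triangle_general {n : ℕ} (W : Submodule ℝ (Fin n → ℝ))
    (hconn : ∀ i j : Fin n, ∃ g : Fin n → ℝ, IsElementary W g ∧ g i ≠ 0 ∧ g j ≠ 0)
    (i j k : Fin n) :
    kappaPair W i j ≤ kappaPair W i k * kappaPair W k j := by
  obtain ⟨h, hh, hhi, hhk⟩ := hconn i k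
  refine Real.sSup_le ?_ (mul_nonneg (kappaPair_nonneg i k) (kappaPair_nonneg k j))
  rintro _ ⟨g, hg, hgi, hgj, rfl⟩
  rw [div_le_iff₀ (abs_pos.2 hgi)]
  exact hg.abs_apply_le_kappaPair_mul_kappaPair hgi hgj hh hhi hhk

/-- the multiplicative triangle inequality `κ_{ij} ≤ κ_{ik} · κ_{kj}` for a
non-separable subspace. -/
theorem kappaPair_triangle {n : ℕ} (W : Submodule ℝ (Fin n → ℝ))
    (hconn : ∀ i j : Fin n, ∃ g : Fin n → ℝ, IsElementary W g ∧ g i ≠ 0 ∧ g j ≠ 0)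
    (i j k : Fin n) (hij : i ≠ j) (hik : i ≠ k) (hjk : j ≠ k) :
    kappaPair W i j ≤ kappaPair W i k * kappaPair W k j :=
  kappaPair_triangle_general W hconn i j k
end

section
/- Let A ∈ R^{m×n} have full row rank with all columns of unit Euclidean norm. Then κ_A ≤ 1/δ_{A^T}, where δ_{A^T} is the largest value δ such that for any linearly independent subset {a_i : i ∈ I} of the columns of A and any λ ∈ R^I, ‖Σ_{i∈I} λ_i a_i‖ ≥ δ · max_{i∈I} |λ_i| ‖a_i‖. -/
open Finset

variable {ι : Type*} [Fintype ι] [DecidableEq ι]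

/-! If `g` is an elementary vector of `ker A` and `g i ≠ 0`, minimality of its support makes the
columns `a_k`, `k ∈ supp g \ {i}`, linearly independent, while `∑_{k ≠ i} g_k a_k = -g_i a_i`.
The defining inequality of `δ` applied to this combination gives `δ |g_j| ≤ |g_i|` for unit
columns. Positivity of `δ` (so that `1 / δ` is not a junk value) holds because on each of the
finitely many independent subfamilies the injective map `λ ↦ ∑ λ_k a_k` is antilipschitz. -/

open scoped Topology

section LowerBound

variable {ι E : Type*} [NormedAddCommGroup E] [NormedSpace ℝ E]

def IsLinIndepLowerBound (v : ι → E) (d : ℝ) : Prop :=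
  ∀ I : Finset ι, LinearIndependent ℝ (fun i : I => v i) →
    ∀ lam : I → ℝ, ∀ i : I, d * (|lam i| * ‖v i‖) ≤ ‖∑ k : I, lam k • v k‖

theorem LinearIndependent.exists_pos_mul_le_norm_sum [Fintype ι] {v : ι → E}
    (hv : LinearIndependent ℝ v) :
    ∃ c > 0, ∀ (lam : ι → ℝ) (i : ι), c * (|lam i| * ‖v i‖) ≤ ‖∑ k, lam k • v k‖ := by
  have hker : LinearMap.ker (Fintype.linearCombination ℝ v) = ⊥ :=
    LinearMap.ker_eq_bot.mpr (linearIndependent_iff_injective_fintypeLinearCombination.mp hv)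
  obtain ⟨K, hK, hanti⟩ := (Fintype.linearCombination ℝ v).exists_antilipschitzWith hker
  set C := ∑ k, ‖v k‖ + 1
  have hC : 0 < C := by positivity
  refine ⟨((K : ℝ) * C)⁻¹, by positivity, fun lam i => ?_⟩
  have hlam : ‖lam‖ ≤ K * ‖∑ k, lam k • v k‖ := by
    simpa [Fintype.linearCombination_apply] using hanti.le_mul_dist lam 0
  have hvi : ‖v i‖ ≤ C :=
    (single_le_sum (fun k _ => norm_nonneg (v k)) (mem_univ i)).trans (lt_add_one _).le
  rw [inv_mul_le_iff₀ (by positivity)]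
  calc |lam i| * ‖v i‖ ≤ ‖lam‖ * C :=
        mul_le_mul (norm_le_pi_norm lam i) hvi (norm_nonneg _) (norm_nonneg _)
    _ ≤ K * ‖∑ k, lam k • v k‖ * C := mul_le_mul_of_nonneg_right hlam hC.le
    _ = K * C * ‖∑ k, lam k • v k‖ := mul_right_comm _ _ _

theorem exists_pos_isLinIndepLowerBound [Finite ι] (v : ι → E) :
    ∃ d > 0, IsLinIndepLowerBound v d := by
  have hI : ∀ I : Finset ι, ∀ᶠ d in 𝓝[>] 0,
      LinearIndependent ℝ (fun i : I => v i) →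
        ∀ lam : I → ℝ, ∀ i : I, d * (|lam i| * ‖v i‖) ≤ ‖∑ k : I, lam k • v k‖ := by
    intro I
    by_cases hlin : LinearIndependent ℝ (fun i : I => v i)
    · obtain ⟨c, hc, hbound⟩ := hlin.exists_pos_mul_le_norm_sum
      filter_upwards [Ioo_mem_nhdsGT hc] with d hd _ lam i
      exact (mul_le_mul_of_nonneg_right hd.2.le (by positivity)).trans (hbound lam i)
    · exact Filter.Eventually.of_forall fun _ h => absurd h hlin
  exact (eventually_mem_nhdsWithin.and (Filter.eventually_all.mpr hI)).exists (f := 𝓝[>] 0)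

theorem IsLinIndepLowerBound.le_one {v : ι → E} {d : ℝ} (hd : IsLinIndepLowerBound v d) {j : ι}
    (hj : v j ≠ 0) : d ≤ 1 := by
  have hlin : LinearIndepOn ℝ v (({j} : Finset ι) : Set ι) := by
    rw [coe_singleton]
    exact .singleton hj
  have h := hd {j} hlin (fun _ => 1) ⟨j, mem_singleton_self j⟩
  simp only [abs_one, one_mul, one_smul] at h
  rw [sum_coe_sort {j} v, sum_singleton] at h
  exact (mul_le_iff_le_one_left (norm_pos_iff.mpr hj)).mp h

theorem isLinIndepLowerBound_of_isEmpty [IsEmpty ι] (v : ι → E) (d : ℝ) :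
    IsLinIndepLowerBound v d := fun _ _ _ i => isEmptyElim (i : ι)

variable [Fintype ι] [DecidableEq ι]

theorem IsElementary.linearIndepOn_support_erase {v : ι → E} {g : ι → ℝ}
    (hg : IsElementary (LinearMap.ker (Fintype.linearCombination ℝ v)) g) {i : ι} (hi : g i ≠ 0) :
    LinearIndepOn ℝ v ↑((univ.filter (g · ≠ 0)).erase i) := by
  rw [linearIndepOn_iff]
  intro l hl hl0
  by_contra hne
  have hker : ⇑l ∈ LinearMap.ker (Fintype.linearCombination ℝ v) := by
    rwa [LinearMap.mem_ker, ← Finsupp.linearCombination_eq_fintype_linearCombination_apply,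
      Finsupp.linearEquivFunOnFinite_symm_coe]
  have hsupp : {k | l k ≠ 0} ⊆ ↑((univ.filter (g · ≠ 0)).erase i) := fun k hk =>
    hl (Finsupp.mem_support_iff.mpr hk)
  have heq := hg.2.2 l hker (DFunLike.coe_injective.ne hne) fun k hk => by
    simpa using (mem_erase.mp (hsupp hk)).2
  have : i ∈ {k | l k ≠ 0} := heq ▸ hi
  simpa using hsupp this

theorem IsLinIndepLowerBound.mul_le_of_isElementary {v : ι → E} {d : ℝ}
    (hd : IsLinIndepLowerBound v d) {g : ι → ℝ}
    (hg : IsElementary (LinearMap.ker (Fintype.linearCombination ℝ v)) g) {i j : ι}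
    (hi : g i ≠ 0) (hj : g j ≠ 0) (hij : j ≠ i) : d * (|g j| * ‖v j‖) ≤ |g i| * ‖v i‖ := by
  set I := (univ.filter (g · ≠ 0)).erase i
  have hsum : ∑ k : I, g k • v k = -(g i • v i) := by
    have h0 : ∑ k ∈ univ.filter (g · ≠ 0), g k • v k = 0 := by
      rw [sum_filter_of_ne fun k _ h => left_ne_zero_of_smul h]
      simpa [Fintype.linearCombination_apply] using hg.1
    rw [sum_coe_sort I (fun k => g k • v k), eq_neg_iff_add_eq_zero, add_comm, ← h0]
    exact add_sum_erase (univ.filter (g · ≠ 0)) (fun k => g k • v k) (by simpa using hi)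
  have h := hd I (hg.linearIndepOn_support_erase hi) (fun k => g k) ⟨j, by simp [I, hij, hj]⟩
  rwa [hsum, norm_neg, norm_smul, Real.norm_eq_abs] at h

theorem kappa_ker_fintypeLinearCombination_le [Nonempty ι] {v : ι → E} (hv : ∀ j, ‖v j‖ = 1)
    {d : ℝ} (hd : IsLinIndepLowerBound v d) (hd0 : 0 < d) :
    kappa (LinearMap.ker (Fintype.linearCombination ℝ v)) ≤ 1 / d := by
  obtain ⟨j₀⟩ := ‹Nonempty ι›
  have h1 : 1 ≤ 1 / d := by
    rw [le_div_iff₀ hd0, one_mul]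
    exact hd.le_one (j := j₀) (norm_ne_zero_iff.mp (by simp [hv]))
  refine Real.sSup_le ?_ (zero_le_one.trans h1)
  rintro _ (rfl | ⟨g, hg, i, j, hi, hj, rfl⟩)
  · exact h1
  rcases eq_or_ne j i with rfl | hij
  · rwa [div_self (abs_ne_zero.mpr hi)]
  have h := hd.mul_le_of_isElementary hg hi hj hij
  rw [hv, hv, mul_one, mul_one] at h
  rwa [div_le_div_iff₀ (abs_pos.mpr hi) hd0, one_mul, mul_comm]

end LowerBound

namespace Matrix

theorem ker_mulVecLin_eq_ker_fintypeLinearCombination {κ ι : Type*} [Fintype ι]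
    (A : Matrix κ ι ℝ) :
    LinearMap.ker A.mulVecLin =
      LinearMap.ker (Fintype.linearCombination ℝ fun j => WithLp.toLp 2 (Aᵀ j)) := by
  have h : Fintype.linearCombination ℝ (fun j => WithLp.toLp 2 (Aᵀ j)) =
      (WithLp.linearEquiv 2 ℝ (κ → ℝ)).symm.toLinearMap ∘ₗ A.mulVecLin := by
    ext x r
    simp [Fintype.linearCombination_apply, mulVec, dotProduct, mul_comm]
  rw [h, LinearEquiv.ker_comp]

theorem isLinIndepLowerBound_toLp_transpose_iff {κ ι : Type*} [Fintype κ]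
    (A : Matrix κ ι ℝ) (d : ℝ) :
    IsLinIndepLowerBound (fun j => WithLp.toLp 2 (Aᵀ j)) d ↔
      ∀ I : Finset ι, LinearIndependent ℝ (fun i : ↥I => fun r => A r (i : ι)) →
        ∀ lam : ↥I → ℝ, ∀ i : ↥I,
          d * (|lam i| * Real.sqrt (∑ r, A r (i : ι) ^ 2)) ≤
            Real.sqrt (∑ r, (∑ i : ↥I, lam i * A r (i : ι)) ^ 2) := by
  refine forall_congr' fun I => imp_congr ?_ (forall₂_congr fun lam i => ?_)
  · exact (WithLp.linearEquiv 2 ℝ (κ → ℝ)).symm.toLinearMap.linearIndependent_iff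
      (LinearEquiv.ker _)
  · simp [EuclideanSpace.norm_eq, mul_comm]

end Matrix

theorem kappa_le_inv_delta_general {m n : ℕ} (A : Matrix (Fin m) (Fin n) ℝ)
    (hcols : ∀ j, ∑ i, A i j ^ 2 = 1) (δ : ℝ)
    (hδ : IsGreatest {d : ℝ | ∀ I : Finset (Fin n),
        LinearIndependent ℝ (fun i : ↥I => fun r => A r (i : Fin n)) →
        ∀ lam : ↥I → ℝ, ∀ i : ↥I,
          d * (|lam i| * Real.sqrt (∑ r, A r (i : Fin n) ^ 2)) ≤
            Real.sqrt (∑ r, (∑ i : ↥I, lam i * A r (i : Fin n)) ^ 2)} δ) :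
    kappa (LinearMap.ker A.mulVecLin) ≤ 1 / δ := by
  set v : Fin n → EuclideanSpace ℝ (Fin m) := fun j => WithLp.toLp 2 (A.transpose j)
  have hv : ∀ j, ‖v j‖ = 1 := fun j => by simp [v, EuclideanSpace.norm_eq, hcols]
  simp only [← A.isLinIndepLowerBound_toLp_transpose_iff] at hδ
  obtain ⟨d, hd0, hd⟩ := exists_pos_isLinIndepLowerBound v
  cases isEmpty_or_nonempty (Fin n)
  · linarith [hδ.2 (isLinIndepLowerBound_of_isEmpty v (δ + 1))]
  rw [A.ker_mulVecLin_eq_ker_fintypeLinearCombination]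
  exact kappa_ker_fintypeLinearCombination_le hv hδ.1 (hd0.trans_le (hδ.2 hd))

/-- if `A` has full row rank and unit-norm columns, then
`κ_A ≤ 1 / δ_{Aᵀ}`, where `δ_{Aᵀ}` is the largest `δ` such that for any linearly
independent set of columns `{a_i : i ∈ I}` and any `λ`,
`‖∑ λ_i a_i‖ ≥ δ · max_i |λ_i| ‖a_i‖`. -/
theorem kappa_le_inv_delta {m n : ℕ} (A : Matrix (Fin m) (Fin n) ℝ)
    (hrank : A.rank = m) (hcols : ∀ j, ∑ i, A i j ^ 2 = 1) (δ : ℝ)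
    (hδ : IsGreatest {d : ℝ | ∀ I : Finset (Fin n),
        LinearIndependent ℝ (fun i : ↥I => fun r => A r (i : Fin n)) →
        ∀ lam : ↥I → ℝ, ∀ i : ↥I,
          d * (|lam i| * Real.sqrt (∑ r, A r (i : Fin n) ^ 2)) ≤
            Real.sqrt (∑ r, (∑ i : ↥I, lam i * A r (i : Fin n)) ^ 2)} δ) :
    kappa (LinearMap.ker A.mulVecLin) ≤ 1 / δ :=
  kappa_le_inv_delta_general A hcols δ hδ
end

section
/- If the system x ∈ W + d, x ≥ 0 is feasible (W ⊆ R^n a subspace, d ∈ R^n), then there exists a feasible x with ‖x − d‖_∞ ≤ κ_W · ‖d^−‖_1, where d^− = max{−d, 0} componentwise. -/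
open Finset

variable {ι : Type*} [Fintype ι] [DecidableEq ι]

section HoffmanAux

-- support as a finset
noncomputable def suppF (g : ι → ℝ) : Finset ι := Finset.univ.filter (fun i => g i ≠ 0)

lemma mem_suppF {g : ι → ℝ} {i : ι} : i ∈ suppF g ↔ g i ≠ 0 := by simp [suppF]

lemma suppF_nonempty {g : ι → ℝ} (hg : g ≠ 0) : (suppF g).Nonempty := by
  rcases Function.ne_iff.mp hg with ⟨i, hi⟩
  exact ⟨i, mem_suppF.mpr hi⟩

lemma conforms_trans {a b c : ι → ℝ} (hab : Conforms a b) (hbc : Conforms b c) :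
    Conforms a c := by
  intro i hi
  have h1 := hab i hi
  have hb : b i ≠ 0 := by intro h0; rw [h0] at h1; simp at h1
  have h2 := hbc i hb
  nlinarith [mul_pos h1 h2, sq_nonneg (b i), sq_nonneg (a i + c i)]

/-- Key subtraction step. -/
lemma key_sub {g h : ι → ℝ} (hg0 : g ≠ 0) (hsupp : ∀ i, g i ≠ 0 → h i ≠ 0) :
    ∃ s : ℝ, s ≠ 0 ∧ Conforms (h - s • g) h ∧ (∃ i, h i ≠ 0 ∧ (h - s • g) i = 0) ∧
      (Conforms g h → 0 < s) := by
  obtain ⟨i₁, hi₁mem, hi₁min⟩ :=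
    Finset.exists_min_image (suppF g) (fun i => |h i / g i|) (suppF_nonempty hg0)
  have hgi₁ : g i₁ ≠ 0 := mem_suppF.mp hi₁mem
  have hhi₁ : h i₁ ≠ 0 := hsupp i₁ hgi₁
  refine ⟨h i₁ / g i₁, div_ne_zero hhi₁ hgi₁, ?_, ⟨i₁, hhi₁, by simp [div_mul_cancel₀, hgi₁]⟩, ?_⟩
  · intro i hi
    by_cases hgi : g i = 0
    · have : (h - (h i₁ / g i₁) • g) i = h i := by simp [hgi]
      rw [this] at hi ⊢
      rcases hi.lt_or_gt with h|h
      · exact mul_pos_of_neg_of_neg h h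
      · exact mul_pos h h
    · have hhi : h i ≠ 0 := hsupp i hgi
      have hmin := hi₁min i (mem_suppF.mpr hgi)
      have habs : |h i₁ / g i₁ * g i| ≤ |h i| := by
        rw [abs_mul]
        calc |h i₁ / g i₁| * |g i| ≤ |h i / g i| * |g i| :=
              mul_le_mul_of_nonneg_right hmin (abs_nonneg _)
          _ = |h i| := by rw [abs_div, div_mul_cancel₀ _ (abs_ne_zero.mpr hgi)]
      have hexp : (h - (h i₁ / g i₁) • g) i = h i - h i₁ / g i₁ * g i := by simp
      rw [hexp] at hi ⊢
      have hne : h i * (h i - h i₁ / g i₁ * g i) ≠ 0 := mul_ne_zero hhi hi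
      have hnn : 0 ≤ h i * (h i - h i₁ / g i₁ * g i) := by
        have h1 : h i₁ / g i₁ * g i * h i ≤ |h i| * |h i| := by
          calc h i₁ / g i₁ * g i * h i ≤ |h i₁ / g i₁ * g i * h i| := le_abs_self _
            _ = |h i₁ / g i₁ * g i| * |h i| := abs_mul _ _
            _ ≤ |h i| * |h i| := mul_le_mul_of_nonneg_right habs (abs_nonneg _)
        nlinarith [sq_abs (h i), sq_nonneg (h i)]
      exact lt_of_le_of_ne hnn (Ne.symm hne)
  · intro hconf
    have h1 := hconf i₁ hgi₁
    rcases mul_pos_iff.mp h1 with ⟨ha, hb⟩ | ⟨ha, hb⟩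
    · exact div_pos ha hb
    · exact div_pos_of_neg_of_neg ha hb

lemma conforms_self {z : ι → ℝ} : Conforms z z := fun i hi => mul_self_pos.mpr hi

lemma conforms_supp {y x : ι → ℝ} (h : Conforms y x) {i : ι} (hi : y i ≠ 0) : x i ≠ 0 := by
  intro h0
  have := h i hi
  rw [h0] at this
  simp at this

/-- Existence of an elementary vector conformal to a given nonzero vector of `W`. -/
lemma exists_elementary_conformal (W : Submodule ℝ (ι → ℝ)) {z : ι → ℝ}
    (hzW : z ∈ W) (hz : z ≠ 0) : ∃ g, IsElementary W g ∧ Conforms g z := by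
  classical
  set C : Set ℕ := {m | ∃ h : ι → ℝ, (h ∈ W ∧ h ≠ 0 ∧ Conforms h z) ∧ (suppF h).card = m} with hC
  have hCne : C.Nonempty := ⟨(suppF z).card, z, ⟨hzW, hz, conforms_self⟩, rfl⟩
  obtain ⟨h, ⟨hhW, hh0, hhz⟩, hcard⟩ := Nat.sInf_mem hCne
  refine ⟨h, ⟨hhW, hh0, ?_⟩, hhz⟩
  intro g hgW hg0 hsub
  by_contra hne
  have hsub' : ∀ i, g i ≠ 0 → h i ≠ 0 := fun i hi => hsub hi
  obtain ⟨s, hs0, hconf, ⟨i₁, hi₁h, hi₁0⟩, _⟩ := key_sub hg0 hsub'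
  set h' := h - s • g with hh'
  have hh'W : h' ∈ W := Submodule.sub_mem W hhW (Submodule.smul_mem W s hgW)
  obtain ⟨i₀, hi₀h, hi₀g⟩ : ∃ i, h i ≠ 0 ∧ g i = 0 := by
    by_contra hcon
    push_neg at hcon
    apply hne
    apply Set.Subset.antisymm hsub
    intro i hi
    simp only [Set.mem_setOf_eq] at hi ⊢
    by_contra hgi
    exact (hcon i hi) hgi
  have hh'0 : h' ≠ 0 := by
    intro h0
    have h1 : h' i₀ = h i₀ := by simp [hh', hi₀g]
    rw [h0] at h1
    exact hi₀h (by simpa using h1.symm)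
  have hconfz : Conforms h' z := conforms_trans hconf hhz
  have hsubset : suppF h' ⊆ suppF h := fun i hi =>
    mem_suppF.mpr (conforms_supp hconf (mem_suppF.mp hi))
  have hss : suppF h' ⊂ suppF h :=
    ⟨hsubset, fun hsup => (mem_suppF.mp (hsup (mem_suppF.mpr hi₁h))) hi₁0⟩
  have hlt : (suppF h').card < (suppF h).card := Finset.card_lt_card hss
  have hmem : (suppF h').card ∈ C := ⟨h', ⟨hh'W, hh'0, hconfz⟩, rfl⟩
  have := Nat.sInf_le hmem
  omega

lemma smul_elementary {W : Submodule ℝ (ι → ℝ)} {g : ι → ℝ} {c : ℝ} (hc : c ≠ 0)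
    (hg : IsElementary W g) : IsElementary W (c • g) := by
  obtain ⟨hgW, hg0, hmin⟩ := hg
  have hsupp : {i | (c • g) i ≠ 0} = {i | g i ≠ 0} := by
    ext i; simp [hc]
  exact ⟨Submodule.smul_mem W c hgW, smul_ne_zero hc hg0,
    fun h hW h0 hs => by rw [hsupp] at hs ⊢; exact hmin h hW h0 hs⟩

/-- Conformal circuit decomposition. -/
lemma conformal_decomposition (W : Submodule ℝ (ι → ℝ)) :
    ∀ N : ℕ, ∀ z ∈ W, (suppF z).card ≤ N →
      ∃ (m : ℕ) (h : Fin m → ι → ℝ),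
        (∀ k, IsElementary W (h k) ∧ Conforms (h k) z) ∧ z = ∑ k, h k := by
  intro N
  induction N with
  | zero =>
    intro z hzW hcard
    have hz : z = 0 := by
      funext i
      by_contra hi
      have h1 : i ∈ suppF z := mem_suppF.mpr hi
      have := Finset.card_pos.mpr ⟨i, h1⟩
      omega
    exact ⟨0, fun _ => 0, fun k => absurd k.2 (by omega), by simp [hz]⟩
  | succ N ih =>
    intro z hzW hcard
    by_cases hz : z = 0
    · exact ⟨0, fun _ => 0, fun k => absurd k.2 (by omega), by simp [hz]⟩
    obtain ⟨g, hgel, hgz⟩ := exists_elementary_conformal W hzW hz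
    have hsupp' : ∀ i, g i ≠ 0 → z i ≠ 0 := fun i hi => conforms_supp hgz hi
    obtain ⟨s, hs0, hconf, ⟨i₁, hi₁z, hi₁0⟩, hspos'⟩ := key_sub hgel.2.1 hsupp'
    have hspos : 0 < s := hspos' hgz
    set z' := z - s • g with hz'
    have hz'W : z' ∈ W := Submodule.sub_mem W hzW (Submodule.smul_mem W s hgel.1)
    have hsubset : suppF z' ⊆ suppF z := fun i hi =>
      mem_suppF.mpr (conforms_supp hconf (mem_suppF.mp hi))
    have hss : suppF z' ⊂ suppF z :=
      ⟨hsubset, fun hsup => (mem_suppF.mp (hsup (mem_suppF.mpr hi₁z))) hi₁0⟩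
    have hlt : (suppF z').card ≤ N := by
      have := Finset.card_lt_card hss
      omega
    obtain ⟨m, h, hprop, hsum⟩ := ih z' hz'W hlt
    refine ⟨m + 1, Fin.cons (s • g) h, ?_, ?_⟩
    · intro k
      refine Fin.cases ?_ ?_ k
      · refine ⟨smul_elementary (ne_of_gt hspos) hgel, ?_⟩
        intro i hi
        have hgi : g i ≠ 0 := by
          simpa [Pi.smul_apply, hs0] using hi
        have := hgz i hgi
        show z i * (s • g) i > 0
        have h2 : z i * (s • g) i = s * (z i * g i) := by
          simp [mul_comm, mul_assoc, mul_left_comm]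
        rw [h2]
        exact mul_pos hspos this
      · intro k'
        exact ⟨(hprop k').1, conforms_trans (hprop k').2 hconf⟩
    · rw [Fin.sum_cons, ← hsum, hz']
      abel

/-- Pointwise abs sum for a conformal decomposition. -/
lemma abs_sum_conformal {m : ℕ} {h : Fin m → ι → ℝ} {z : ι → ℝ}
    (hc : ∀ k, Conforms (h k) z) (hz : z = ∑ k, h k) (i : ι) :
    ∑ k, |h k i| = |z i| := by
  have hzi : z i = ∑ k, h k i := by rw [hz]; simp
  have hsign : ∀ k, 0 ≤ z i * h k i := by
    intro k
    by_cases h0 : h k i = 0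
    · simp [h0]
    · exact (hc k i h0).le
  rcases lt_trichotomy (z i) 0 with hlt | heq | hgt
  · have hkle : ∀ k, h k i ≤ 0 := by
      intro k
      by_contra hpos
      push_neg at hpos
      nlinarith [hsign k]
    rw [abs_of_neg hlt, hzi]
    rw [← Finset.sum_neg_distrib]
    exact Finset.sum_congr rfl fun k _ => abs_of_nonpos (hkle k)
  · have hk0 : ∀ k, h k i = 0 := by
      intro k
      by_contra h0
      have := hc k i h0
      rw [heq] at this
      simp at this
    simp [heq, hk0]
  · have hkge : ∀ k, 0 ≤ h k i := by
      intro k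
      by_contra hneg
      push_neg at hneg
      nlinarith [hsign k]
    rw [abs_of_pos hgt, hzi]
    exact Finset.sum_congr rfl fun k _ => abs_of_nonneg (hkge k)

/-- Elementary vectors with nested support are proportional. -/
lemma elementary_proportional {W : Submodule ℝ (ι → ℝ)} {g h : ι → ℝ}
    (hg : IsElementary W g) (hh : IsElementary W h)
    (hsub : {i | h i ≠ 0} ⊆ {i | g i ≠ 0}) : ∃ c : ℝ, c ≠ 0 ∧ h = c • g := by
  obtain ⟨hgW, hg0, hgmin⟩ := hg
  obtain ⟨hhW, hh0, -⟩ := hh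
  have heq : {i | h i ≠ 0} = {i | g i ≠ 0} := hgmin h hhW hh0 hsub
  obtain ⟨i₀, hi₀⟩ := suppF_nonempty hg0
  have hgi₀ : g i₀ ≠ 0 := mem_suppF.mp hi₀
  have hhi₀ : h i₀ ≠ 0 := (Set.ext_iff.mp heq i₀).mpr hgi₀
  set c := h i₀ / g i₀ with hc
  have hc0 : c ≠ 0 := div_ne_zero hhi₀ hgi₀
  refine ⟨c, hc0, ?_⟩
  by_contra hne
  have hu0 : h - c • g ≠ 0 := fun h0 => hne (by
    have := sub_eq_zero.mp h0
    exact this)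
  have huW : h - c • g ∈ W := Submodule.sub_mem W hhW (Submodule.smul_mem W c hgW)
  have husub : {i | (h - c • g) i ≠ 0} ⊆ {i | g i ≠ 0} := by
    intro i hi
    simp only [Set.mem_setOf_eq, Pi.sub_apply, Pi.smul_apply, smul_eq_mul] at hi ⊢
    by_contra hgi
    have hhi : h i = 0 := by
      by_contra hhi
      exact ((Set.ext_iff.mp heq i).mp hhi) hgi
    rw [hhi, hgi] at hi
    simp at hi
  have := hgmin _ huW hu0 husub
  have hi₀mem : i₀ ∈ {i | (h - c • g) i ≠ 0} := by
    rw [this]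
    exact hgi₀
  simp only [Set.mem_setOf_eq, Pi.sub_apply, Pi.smul_apply, smul_eq_mul, hc] at hi₀mem
  rw [div_mul_cancel₀ _ hgi₀] at hi₀mem
  simp at hi₀mem

lemma kappa_bddAbove (W : Submodule ℝ (ι → ℝ)) :
    BddAbove ({1} ∪ {t : ℝ | ∃ g : ι → ℝ, IsElementary W g ∧
      ∃ i j, g i ≠ 0 ∧ g j ≠ 0 ∧ t = |g j| / |g i|}) := by
  classical
  apply Set.Finite.bddAbove
  apply Set.Finite.union (Set.finite_singleton 1)
  set F : Finset ι → (ι → ℝ) := fun S =>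
    if hS : ∃ g, IsElementary W g ∧ suppF g = S then hS.choose else 0 with hF
  apply Set.Finite.subset (Set.finite_range
    (fun p : Finset ι × ι × ι => |F p.1 p.2.2| / |F p.1 p.2.1|))
  rintro t ⟨g, hg, i, j, hi, hj, rfl⟩
  refine ⟨⟨suppF g, i, j⟩, ?_⟩
  have hex : ∃ g', IsElementary W g' ∧ suppF g' = suppF g := ⟨g, hg, rfl⟩
  have hFval : F (suppF g) = hex.choose := by rw [hF]; exact dif_pos hex
  obtain ⟨hg₀el, hg₀supp⟩ := hex.choose_spec
  set g₀ := hex.choose with hg₀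
  have hsub : {i | g i ≠ 0} ⊆ {i | g₀ i ≠ 0} := by
    intro i hi
    have h1 : i ∈ suppF g := mem_suppF.mpr hi
    rw [← hg₀supp] at h1
    exact mem_suppF.mp h1
  obtain ⟨c, hc0, hceq⟩ := elementary_proportional hg₀el hg hsub
  simp only [hFval, ← hg₀]
  rw [hceq]
  simp only [Pi.smul_apply, smul_eq_mul, abs_mul]
  rw [mul_div_mul_left _ _ (abs_ne_zero.mpr hc0)]

lemma one_le_kappa (W : Submodule ℝ (ι → ℝ)) : 1 ≤ kappa W :=
  le_csSup (kappa_bddAbove W) (Or.inl rfl)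

lemma kappa_nonneg (W : Submodule ℝ (ι → ℝ)) : 0 ≤ kappa W :=
  le_trans zero_le_one (one_le_kappa W)

lemma abs_le_kappa_mul {W : Submodule ℝ (ι → ℝ)} {g : ι → ℝ} {i j : ι}
    (hg : IsElementary W g) (hi : g i ≠ 0) (hj : g j ≠ 0) :
    |g j| ≤ kappa W * |g i| := by
  have h1 : |g j| / |g i| ≤ kappa W :=
    le_csSup (kappa_bddAbove W) (Or.inr ⟨g, hg, i, j, hi, hj, rfl⟩)
  rwa [div_le_iff₀ (abs_pos.mpr hi)] at h1

lemma abs_sub_scaled {a b α : ℝ} (hsign : 0 ≤ a * b) (hle : |b| ≤ |a|)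
    (h0 : 0 < α) (h1 : α ≤ 1) : |a - α * b| = |a| - α * |b| := by
  rcases lt_trichotomy a 0 with hlt | heq | hgt
  · have hb : b ≤ 0 := by nlinarith
    have hba : a ≤ b := by
      rw [abs_of_neg hlt, abs_of_nonpos hb] at hle
      linarith
    have : a - α * b ≤ 0 := by nlinarith
    rw [abs_of_nonpos this, abs_of_neg hlt, abs_of_nonpos hb]
    ring
  · have hb : b = 0 := by
      rw [heq] at hle
      simpa using abs_nonpos_iff.mp (by simpa using hle)
    simp [heq, hb]
  · have hb : 0 ≤ b := by nlinarith
    have hba : b ≤ a := by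
      rw [abs_of_pos hgt, abs_of_nonneg hb] at hle
      linarith
    have : 0 ≤ a - α * b := by nlinarith
    rw [abs_of_nonneg this, abs_of_pos hgt, abs_of_nonneg hb]

/-- Existence of an ℓ1-minimal feasible point. -/
lemma exists_min_l1 {n : ℕ} (W : Submodule ℝ (Fin n → ℝ)) (d : Fin n → ℝ)
    (hfeas : ∃ x : Fin n → ℝ, x - d ∈ W ∧ ∀ i, 0 ≤ x i) :
    ∃ x : Fin n → ℝ, (x - d ∈ W ∧ ∀ i, 0 ≤ x i) ∧
      ∀ y : Fin n → ℝ, y - d ∈ W → (∀ i, 0 ≤ y i) →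
        ∑ i, |x i - d i| ≤ ∑ i, |y i - d i| := by
  obtain ⟨x₀, hx₀W, hx₀⟩ := hfeas
  set f : (Fin n → ℝ) → ℝ := fun x => ∑ i, |x i - d i| with hf
  have hfc : Continuous f := by
    apply continuous_finset_sum
    intro i _
    exact ((continuous_apply i).sub continuous_const).abs
  set S : Set (Fin n → ℝ) := {x | x - d ∈ W ∧ ∀ i, 0 ≤ x i} with hS
  have hSclosed : IsClosed S := by
    have hSeq : S = ((fun x : Fin n → ℝ => x - d) ⁻¹' W) ∩ (⋂ i, {x : Fin n → ℝ | 0 ≤ x i}) := by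
      ext x
      simp [hS, Set.mem_iInter]
    rw [hSeq]
    exact IsClosed.inter
      ((Submodule.closed_of_finiteDimensional W).preimage (continuous_id.sub continuous_const))
      (isClosed_iInter fun i => isClosed_le continuous_const (continuous_apply i))
  set K : Set (Fin n → ℝ) := S ∩ {x | f x ≤ f x₀} with hK
  have hfx₀nn : 0 ≤ f x₀ := Finset.sum_nonneg fun i _ => abs_nonneg _
  have hKsub : K ⊆ Metric.closedBall d (f x₀) := by
    intro x hx
    rw [Metric.mem_closedBall]
    rw [dist_pi_le_iff hfx₀nn]
    intro i
    rw [Real.dist_eq]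
    calc |x i - d i| ≤ f x :=
          Finset.single_le_sum (fun i _ => abs_nonneg (x i - d i)) (Finset.mem_univ i)
      _ ≤ f x₀ := hx.2
  have hKclosed : IsClosed K := hSclosed.inter (isClosed_le hfc continuous_const)
  have hKcompact : IsCompact K :=
    (isCompact_closedBall d (f x₀)).of_isClosed_subset hKclosed hKsub
  have hKne : K.Nonempty := ⟨x₀, ⟨hx₀W, hx₀⟩, Set.mem_setOf_eq ▸ le_rfl⟩
  obtain ⟨x, hxK, hmin⟩ := hKcompact.exists_isMinOn hKne hfc.continuousOn
  refine ⟨x, hxK.1, ?_⟩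
  intro y hyW hy
  by_cases hcase : f y ≤ f x₀
  · exact (isMinOn_iff.mp hmin) y ⟨⟨hyW, hy⟩, hcase⟩
  · push_neg at hcase
    calc f x ≤ f x₀ := (isMinOn_iff.mp hmin) x₀ ⟨⟨hx₀W, hx₀⟩, Set.mem_setOf_eq ▸ le_rfl⟩
      _ ≤ f y := le_of_lt hcase


end HoffmanAux

/-- Hoffman-type feasibility proximity: if `x ∈ W + d, x ≥ 0` is feasible,
then it has a solution with `‖x − d‖_∞ ≤ κ_W · ‖d⁻‖_1`. -/
theorem hoffman_feasibility {n : ℕ} (W : Submodule ℝ (Fin n → ℝ)) (d : Fin n → ℝ)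
    (hfeas : ∃ x : Fin n → ℝ, x - d ∈ W ∧ ∀ i, 0 ≤ x i) :
    ∃ x : Fin n → ℝ, x - d ∈ W ∧ (∀ i, 0 ≤ x i) ∧
      ∀ i, |x i - d i| ≤ kappa W * ∑ i, max (-d i) 0 := by
  classical
  obtain ⟨x, ⟨hxW, hxnn⟩, hmin⟩ := exists_min_l1 W d hfeas
  set z : Fin n → ℝ := x - d with hz
  obtain ⟨m, h, hprop, hsum⟩ := conformal_decomposition W (suppF z).card z hxW le_rfl
  have hzi_eq : ∀ i, z i = x i - d i := fun i => rfl
  have hclaim : ∀ k : Fin m, ∃ i, x i = 0 ∧ 0 < h k i := by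
    intro k
    by_contra hcon
    push_neg at hcon
    set A : Finset (Fin n) := Finset.univ.filter (fun i => 0 < h k i) with hA
    have hxpos : ∀ i ∈ A, 0 < x i := by
      intro i hi
      have hki : 0 < h k i := (Finset.mem_filter.mp hi).2
      rcases (hxnn i).lt_or_eq with hp | hp
      · exact hp
      · exact absurd hki (not_lt.mpr (hcon i hp.symm))
    have hαex : ∃ α : ℝ, 0 < α ∧ α ≤ 1 ∧ ∀ i, α * h k i ≤ x i := by
      by_cases hAne : A.Nonempty
      · refine ⟨min 1 (A.inf' hAne (fun i => x i / h k i)), ?_, min_le_left _ _, ?_⟩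
        · apply lt_min one_pos
          rw [Finset.lt_inf'_iff]
          intro i hi
          exact div_pos (hxpos i hi) (Finset.mem_filter.mp hi).2
        · intro i
          by_cases hki : 0 < h k i
          · have hiA : i ∈ A := Finset.mem_filter.mpr ⟨Finset.mem_univ i, hki⟩
            have h1 : min 1 (A.inf' hAne (fun i => x i / h k i)) ≤ x i / h k i :=
              le_trans (min_le_right _ _) (Finset.inf'_le _ hiA)
            calc min 1 (A.inf' hAne (fun i => x i / h k i)) * h k i
                ≤ (x i / h k i) * h k i := mul_le_mul_of_nonneg_right h1 hki.le
              _ = x i := div_mul_cancel₀ _ (ne_of_gt hki)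
          · push_neg at hki
            have hmn : 0 < min 1 (A.inf' hAne (fun i => x i / h k i)) := by
              apply lt_min one_pos
              rw [Finset.lt_inf'_iff]
              intro i hi
              exact div_pos (hxpos i hi) (Finset.mem_filter.mp hi).2
            have h2 : min 1 (A.inf' hAne (fun i => x i / h k i)) * h k i ≤ 0 :=
              mul_nonpos_of_nonneg_of_nonpos hmn.le hki
            exact le_trans h2 (hxnn i)
      · refine ⟨1, one_pos, le_rfl, ?_⟩
        intro i
        have hki : h k i ≤ 0 := by
          by_contra hp
          push_neg at hp
          exact hAne ⟨i, Finset.mem_filter.mpr ⟨Finset.mem_univ i, hp⟩⟩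
        nlinarith [hxnn i]
    obtain ⟨α, hα0, hα1, hαle⟩ := hαex
    set x' : Fin n → ℝ := x - α • h k with hx'
    have hx'W : x' - d ∈ W := by
      have heq2 : x' - d = z - α • h k := by rw [hx', hz]; abel
      rw [heq2]
      exact Submodule.sub_mem W hxW (Submodule.smul_mem W α (hprop k).1.1)
    have hx'nn : ∀ i, 0 ≤ x' i := by
      intro i
      have h3 : x' i = x i - α * h k i := rfl
      rw [h3]
      linarith [hαle i]
    have hk0 : h k ≠ 0 := (hprop k).1.2.1
    have habs : ∀ i, |x' i - d i| = |z i| - α * |h k i| := by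
      intro i
      have hterm : x' i - d i = z i - α * (h k i) := by
        have : x' i = x i - α * h k i := rfl
        rw [this, hzi_eq]
        ring
      rw [hterm]
      apply abs_sub_scaled ?_ ?_ hα0 hα1
      · by_cases h0 : h k i = 0
        · simp [h0]
        · exact ((hprop k).2 i h0).le
      · have h4 := abs_sum_conformal (fun k => (hprop k).2) hsum i
        calc |h k i| ≤ ∑ k', |h k' i| :=
              Finset.single_le_sum (fun k' _ => abs_nonneg (h k' i)) (Finset.mem_univ k)
          _ = |z i| := h4
    have hpos : 0 < ∑ i, |h k i| := by
      obtain ⟨i, hi⟩ := suppF_nonempty hk0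
      exact Finset.sum_pos' (fun i _ => abs_nonneg _)
        ⟨i, Finset.mem_univ i, abs_pos.mpr (mem_suppF.mp hi)⟩
    have hlt : ∑ i, |x' i - d i| < ∑ i, |x i - d i| := by
      calc ∑ i, |x' i - d i| = ∑ i, (|z i| - α * |h k i|) :=
            Finset.sum_congr rfl fun i _ => habs i
        _ = (∑ i, |z i|) - α * ∑ i, |h k i| := by
            rw [Finset.sum_sub_distrib, Finset.mul_sum]
        _ < ∑ i, |z i| := by nlinarith
        _ = ∑ i, |x i - d i| := by simp [hzi_eq]
    exact absurd (hmin x' hx'W hx'nn) (not_le.mpr hlt)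
  choose σ hσx hσpos using hclaim
  have habs_z : ∀ i, ∑ k, |h k i| = |z i| := abs_sum_conformal (fun k => (hprop k).2) hsum
  have hsumb : ∑ k, |h k (σ k)| ≤ ∑ i, max (-d i) 0 := by
    rw [← Finset.sum_fiberwise Finset.univ σ (fun k => |h k (σ k)|)]
    apply Finset.sum_le_sum
    intro i _
    by_cases hfib : (Finset.univ.filter (fun k => σ k = i)).Nonempty
    · obtain ⟨k₀, hk₀⟩ := hfib
      have hk₀i : σ k₀ = i := (Finset.mem_filter.mp hk₀).2
      have hxi : x i = 0 := hk₀i ▸ hσx k₀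
      have hki : 0 < h k₀ i := hk₀i ▸ hσpos k₀
      have hzi : 0 < z i := by
        have h5 := (hprop k₀).2 i (ne_of_gt hki)
        nlinarith
      have hdi : z i = -d i := by
        rw [hzi_eq, hxi]
        ring
      have h6 : ∑ k ∈ Finset.univ.filter (fun k => σ k = i), |h k (σ k)|
          = ∑ k ∈ Finset.univ.filter (fun k => σ k = i), |h k i| :=
        Finset.sum_congr rfl fun k hk => by rw [(Finset.mem_filter.mp hk).2]
      rw [h6]
      calc ∑ k ∈ Finset.univ.filter (fun k => σ k = i), |h k i|
          ≤ ∑ k, |h k i| := Finset.sum_le_sum_of_subset_of_nonneg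
            (Finset.filter_subset _ _) (fun _ _ _ => abs_nonneg _)
        _ = |z i| := habs_z i
        _ = z i := abs_of_pos hzi
        _ = -d i := hdi
        _ ≤ max (-d i) 0 := le_max_left _ _
    · rw [Finset.not_nonempty_iff_eq_empty] at hfib
      rw [hfib, Finset.sum_empty]
      exact le_max_right _ _
  refine ⟨x, hxW, hxnn, ?_⟩
  intro j
  calc |x j - d j| = |z j| := by rw [hzi_eq]
    _ = ∑ k, |h k j| := (habs_z j).symm
    _ ≤ ∑ k, kappa W * |h k (σ k)| := by
        apply Finset.sum_le_sum
        intro k _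
        by_cases h0 : h k j = 0
        · simp only [h0, abs_zero]
          exact mul_nonneg (kappa_nonneg W) (abs_nonneg _)
        · exact abs_le_kappa_mul (hprop k).1 (ne_of_gt (hσpos k)) h0
    _ = kappa W * ∑ k, |h k (σ k)| := by rw [Finset.mul_sum]
    _ ≤ kappa W * ∑ i, max (-d i) 0 := mul_le_mul_of_nonneg_left hsumb (kappa_nonneg W)
end

section
/- Let W ⊆ R^n be a rational linear subspace with κ_W = 1, and let z ∈ W ∩ Z^n. Then every maximal conformal circuit decomposition z = Σ_{k=1}^h g^k has all g^k integral elementary vectors of W. -/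
open Finset

variable {ι : Type*} [Fintype ι] [DecidableEq ι]

/-- A maximal conformal circuit decomposition of `z`, as a list of vectors: if `z` is
elementary, the decomposition is `[z]`; otherwise pick an elementary `e` conformal with
`z`, take `g¹ = α e` with `α > 0` maximal such that `z − α e` conforms with `z`, and
recurse on `z − g¹`. -/
def IsMaxConfDecomp (W : Submodule ℝ (ι → ℝ)) : (ι → ℝ) → List (ι → ℝ) → Prop
  | z, [] => z = 0
  | z, g :: rest =>
      (IsElementary W z ∧ g = z ∧ rest = []) ∨
      (¬ IsElementary W z ∧
        ∃ (e : ι → ℝ) (α : ℝ), IsElementary W e ∧ Conforms e z ∧ 0 < α ∧ g = α • e ∧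
          Conforms (z - g) z ∧ (∀ β : ℝ, α < β → ¬ Conforms (z - β • e) z) ∧
          IsMaxConfDecomp W (z - g) rest)


lemma abs_eq_of_kappa_one {W : Submodule ℝ (ι → ℝ)} (hk : kappa W = 1)
    {e : ι → ℝ} (he : IsElementary W e) {i j : ι} (hi : e i ≠ 0) (hj : e j ≠ 0) :
    |e i| = |e j| := by
  have hbdd : BddAbove ({1} ∪ {t : ℝ | ∃ g : ι → ℝ, IsElementary W g ∧
      ∃ i j, g i ≠ 0 ∧ g j ≠ 0 ∧ t = |g j| / |g i|}) := by
    by_contra h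
    rw [kappa, Real.sSup_of_not_bddAbove h] at hk
    norm_num at hk
  have key : ∀ a b : ι, e a ≠ 0 → e b ≠ 0 → |e b| / |e a| ≤ 1 := by
    intro a b ha hb
    have hmem : |e b| / |e a| ∈ ({1} ∪ {t : ℝ | ∃ g : ι → ℝ, IsElementary W g ∧
        ∃ i j, g i ≠ 0 ∧ g j ≠ 0 ∧ t = |g j| / |g i|}) :=
      Or.inr ⟨e, he, a, b, ha, hb, rfl⟩
    have := le_csSup hbdd hmem
    rw [← kappa, hk] at this
    exact this
  have h1 := key i j hi hj
  have h2 := key j i hj hi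
  have hpi : (0:ℝ) < |e i| := abs_pos.mpr hi
  have hpj : (0:ℝ) < |e j| := abs_pos.mpr hj
  rw [div_le_one hpi] at h1
  rw [div_le_one hpj] at h2
  linarith

lemma IsElementary.smul' {W : Submodule ℝ (ι → ℝ)} {e : ι → ℝ}
    (he : IsElementary W e) {c : ℝ} (hc : c ≠ 0) : IsElementary W (c • e) := by
  obtain ⟨heW, hne, hmin⟩ := he
  have hsupp : {i | (c • e) i ≠ 0} = {i | e i ≠ 0} := by
    ext i
    simp [Pi.smul_apply, smul_eq_mul, mul_ne_zero_iff, hc]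
  refine ⟨W.smul_mem c heW, ?_, ?_⟩
  · intro h
    apply hne
    funext i
    have := congrFun h i
    simp only [Pi.smul_apply, smul_eq_mul, Pi.zero_apply] at this ⊢
    rcases mul_eq_zero.mp this with h' | h'
    · exact absurd h' hc
    · exact h'
  · intro h hW hne' hsub
    rw [hsupp] at hsub ⊢
    exact hmin h hW hne' hsub

/-- if `κ_W = 1` and `z ∈ W ∩ ℤ^n`, then every maximal conformal circuit
decomposition of `z` consists of integral elementary vectors of `W`. -/
theorem maxConfDecomp_integral_of_kappa_one {n : ℕ} (W : Submodule ℝ (Fin n → ℝ))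
    (hrat : IsRationalSubspace W) (hk : kappa W = 1)
    (z : Fin n → ℝ) (hzW : z ∈ W) (hzint : ∀ i, ∃ a : ℤ, z i = (a : ℝ))
    (L : List (Fin n → ℝ)) (hL : IsMaxConfDecomp W z L) :
    ∀ g ∈ L, IsElementary W g ∧ ∀ i, ∃ a : ℤ, g i = (a : ℝ) :=  by
  induction L generalizing z with
  | nil => intro g hg; simp at hg
  | cons g rest ih =>
    rcases hL with ⟨hz, rfl, rfl⟩ | ⟨-, e, α, he, hce, hα, hgdef, hconf, hmax, hrec⟩
    · intro g' hg'
      simp only [List.mem_singleton] at hg'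
      subst hg'
      exact ⟨hz, hzint⟩
    · subst hgdef
      -- support of e is contained in support of z
      have hsupp : ∀ i, e i ≠ 0 → z i ≠ 0 := by
        intro i hi hzi
        have h1 : (z - α • e) i ≠ 0 := by
          simp [Pi.sub_apply, Pi.smul_apply, smul_eq_mul, hzi, hα.ne', hi]
        have := hconf i h1
        rw [hzi] at this
        simp at this
      -- there is a critical index where z i = α * e i
      have hcrit : ∃ i0, e i0 ≠ 0 ∧ z i0 = α * e i0 := by
        by_contra hc
        push_neg at hc
        have hpos : ∀ i, e i ≠ 0 → z i * (z i - α * e i) > 0 := by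
          intro i hi
          have h1 : (z - α • e) i ≠ 0 := by
            simpa [Pi.sub_apply, Pi.smul_apply, smul_eq_mul] using sub_ne_zero.mpr (hc i hi)
          simpa [Pi.sub_apply, Pi.smul_apply, smul_eq_mul] using hconf i h1
        classical
        set s := Finset.univ.filter (fun i => e i ≠ 0) with hs
        have hsne : s.Nonempty := by
          obtain ⟨i, hi⟩ := Function.ne_iff.mp he.2.1
          have hi' : e i ≠ 0 := by simpa using hi
          exact ⟨i, by simp [hs, hi']⟩
        set ε := s.inf' hsne (fun i => z i * (z i - α * e i) / (2 * (z i * e i))) with hε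
        have hεpos : 0 < ε := by
          rw [hε, Finset.lt_inf'_iff]
          intro i hi
          have hi' : e i ≠ 0 := by simpa [hs] using hi
          exact div_pos (hpos i hi') (by have := hce i hi'; linarith)
        refine hmax (α + ε) (by linarith) ?_
        intro i hne'
        by_cases hi : e i = 0
        · have hzz : (z - (α + ε) • e) i = z i := by
            simp [Pi.sub_apply, Pi.smul_apply, smul_eq_mul, hi]
          rw [hzz] at hne' ⊢
          exact mul_self_pos.mpr hne'
        · have hzei := hce i hi
          have hεle : ε ≤ z i * (z i - α * e i) / (2 * (z i * e i)) := by
            rw [hε]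
            exact Finset.inf'_le _ (by simp [hs, hi])
          have h2 : ε * (2 * (z i * e i)) ≤ z i * (z i - α * e i) :=
            (le_div_iff₀ (by linarith)).mp hεle
          have key : z i * (z i - (α + ε) * e i) > 0 := by nlinarith [hpos i hi]
          simpa [Pi.sub_apply, Pi.smul_apply, smul_eq_mul] using key
      obtain ⟨i0, hei0, hzi0⟩ := hcrit
      have hzi0ne := hsupp i0 hei0
      obtain ⟨a, ha⟩ := hzint i0
      have hgint : ∀ j, ∃ b : ℤ, (α • e) j = (b : ℝ) := by
        intro j
        by_cases hj : e j = 0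
        · exact ⟨0, by simp [Pi.smul_apply, smul_eq_mul, hj]⟩
        · have habs : |e j| = |e i0| := abs_eq_of_kappa_one hk he hj hei0
          have h1 : |(α • e) j| = |(a : ℝ)| := by
            rw [Pi.smul_apply, smul_eq_mul, abs_mul, habs, ← abs_mul, ← hzi0, ha]
          rcases abs_eq_abs.mp h1 with h | h
          · exact ⟨a, h⟩
          · exact ⟨-a, by push_cast; exact h⟩
      have hgW : α • e ∈ W := W.smul_mem _ he.1
      have hgel : IsElementary W (α • e) := he.smul' hα.ne'
      intro g' hg'
      rcases List.mem_cons.mp hg' with rfl | hg'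
      · exact ⟨hgel, hgint⟩
      · refine ih (z - α • e) (W.sub_mem hzW hgW) ?_ hrec g' hg'
        intro i
        obtain ⟨a1, ha1⟩ := hzint i
        obtain ⟨b1, hb1⟩ := hgint i
        exact ⟨a1 - b1, by push_cast; simp [Pi.sub_apply, ha1, hb1]⟩
end
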